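/- For all integers m, n with n/2 ≤ m ≤ n, the probability that a uniformly random σ ∈ S_n has no cycle of length greater than m equals 1 − (H_n − H_m); that is, ν(n,m) = 1 − Σ_{k=m+1}^{n} 1/k. -/

import Mathlib

open Finset

/-- The number of cycles of length `j` in the permutation `σ` of `{1,…,n}`
(fixed points count as cycles of length 1): the number of points whose
orbit under `σ` has size `j`, divided by `j`. -/
noncomputable def cycleCount {n : ℕ} (σ : Equiv.Perm (Fin n)) (j : ℕ) : ℕ :=
  (Finset.univ.filter fun x => Function.minimalPeriod (⇑σ) x = j).card / j

/-- The number of cycles of `σ` whose length lies in the set `I`. -/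
noncomputable def cycleCountIn {n : ℕ} (σ : Equiv.Perm (Fin n)) (I : Finset ℕ) : ℕ :=
  ∑ j ∈ I, cycleCount σ j

/-- The total number of cycles of `σ` (fixed points included as 1-cycles). -/
noncomputable def totalCycles {n : ℕ} (σ : Equiv.Perm (Fin n)) : ℕ :=
  cycleCountIn σ (Finset.Icc 1 n)

/-- Probability of an event under a uniformly random permutation of `{1,…,n}`. -/
noncomputable def permP (n : ℕ) (E : Equiv.Perm (Fin n) → Prop) : ℝ :=
  (Nat.card {σ : Equiv.Perm (Fin n) // E σ} : ℝ) / n.factorial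

/-- Expectation of `f` under a uniformly random permutation of `{1,…,n}`. -/
noncomputable def permE (n : ℕ) (f : Equiv.Perm (Fin n) → ℝ) : ℝ :=
  (∑ σ : Equiv.Perm (Fin n), f σ) / n.factorial

/-- `H(I) = ∑_{j ∈ I} 1/j`. -/
noncomputable def Hset (I : Finset ℕ) : ℝ := ∑ j ∈ I, (1 : ℝ) / j

/-- The harmonic sum `H_n = ∑_{i=1}^n 1/i`. -/
noncomputable def harm (n : ℕ) : ℝ := Hset (Finset.Icc 1 n)

/-!
Two cycles of lengths `k ≠ k'` with `k + k' > n` cannot coexist in a permutation of `n` points,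
and there is at most one cycle of length `k > n / 2`. So for `m ≥ n / 2` the number of cycles
with length in `(m, n]` is `0` or `1`, and `ν(n, m) = 1 - E[#cycles with length in (m, n]]`.

The expected number of `k`-cycles is `1 / k`: for each point `x` and `1 ≤ k ≤ n`, exactly
`(n - 1)!` permutations put `x` on a cycle of length `k` (by induction on `n`, removing `0` from
its cycle with `decomposeFin`; conjugation moves any point to `0`). Double counting pairs
`(σ, x)` with `x` on a `k`-cycle of `σ` then gives `n!`, which is `k` times the sum over `σ` of
the number of `k`-cycles.
-/

namespace Equiv.Perm

open Function MulAction Subgroup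

open scoped Nat

variable {α : Type*}

theorem minimalPeriod_pos [Finite α] (σ : Perm α) (x : α) : 0 < minimalPeriod σ x :=
  minimalPeriod_pos_of_mem_periodicPts (σ.injective.mem_periodicPts x)

theorem minimalPeriod_conj (σ π : Perm α) (x : α) :
    minimalPeriod (π * σ * π⁻¹) (π x) = minimalPeriod σ x := by
  refine minimalPeriod_eq_minimalPeriod_iff.2 fun k => ?_
  rw [IsPeriodicPt, IsFixedPt, IsPeriodicPt, IsFixedPt, iterate_eq_pow, iterate_eq_pow, conj_pow]
  simp

theorem natCard_orbit_zpowers (σ : Perm α) (x : α) :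
    Nat.card (orbit (zpowers σ) x) = minimalPeriod σ x :=
  (Nat.card_congr (orbitZPowersEquiv σ x)).trans (Nat.card_zmod _)

theorem minimalPeriod_eq_of_mem_orbit_zpowers {σ : Perm α} {x y : α}
    (h : y ∈ orbit (zpowers σ) x) : minimalPeriod σ y = minimalPeriod σ x := by
  rw [← natCard_orbit_zpowers, ← natCard_orbit_zpowers, orbit_eq_iff.2 h]

theorem mem_orbit_zpowers_of_card_lt_add [Finite α] {σ : Perm α} {x y : α}
    (h : Nat.card α < minimalPeriod σ x + minimalPeriod σ y) :
    y ∈ orbit (zpowers σ) x := by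
  refine orbit_eq_iff.1 ((orbit.eq_or_disjoint y x).resolve_right fun hdisj => h.not_ge ?_)
  rw [← natCard_orbit_zpowers, ← natCard_orbit_zpowers, Nat.card_coe_set_eq,
    Nat.card_coe_set_eq, add_comm, ← Set.ncard_union_eq hdisj]
  exact Set.ncard_le_card _

theorem card_filter_minimalPeriod_eq_minimalPeriod [Fintype α] (σ : Perm α) {x : α}
    (h : Fintype.card α < 2 * minimalPeriod σ x) :
    #{y | minimalPeriod σ y = minimalPeriod σ x} = minimalPeriod σ x := by
  have horbit : (({y | minimalPeriod σ y = minimalPeriod σ x} : Finset α) : Set α)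
      = orbit (zpowers σ) x := by
    ext y
    simp only [coe_filter, mem_univ, true_and, Set.mem_ofPred_eq]
    refine ⟨fun hy => mem_orbit_zpowers_of_card_lt_add ?_, minimalPeriod_eq_of_mem_orbit_zpowers⟩
    rw [hy, Nat.card_eq_fintype_card]
    omega
  rw [← Set.ncard_coe_finset, horbit, ← Nat.card_coe_set_eq, natCard_orbit_zpowers]

theorem card_filter_minimalPeriod_congr [Fintype α] [DecidableEq α] (x y : α) (k : ℕ) :
    #{σ : Perm α | minimalPeriod σ x = k} = #{σ : Perm α | minimalPeriod σ y = k} := by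
  refine card_equiv (MulAut.conj (swap x y)).toEquiv fun σ => ?_
  simp only [mem_filter, mem_univ, true_and, MulEquiv.toEquiv_eq_coe, EquivLike.coe_coe,
    MulAut.conj_apply]
  have hconj := minimalPeriod_conj σ (swap x y) x
  rw [swap_apply_left] at hconj
  rw [hconj]

variable {n : ℕ}

theorem minimalPeriod_decomposeFin_symm_zero (e : Perm (Fin n)) :
    minimalPeriod (decomposeFin.symm (0, e)) 0 = 1 := by
  rw [minimalPeriod_eq_one_iff_isFixedPt]
  exact decomposeFin_symm_apply_zero 0 e

theorem minimalPeriod_decomposeFin_symm_succ (q : Fin n) (e : Perm (Fin n)) :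
    minimalPeriod (decomposeFin.symm (q.succ, e)) 0 = minimalPeriod e q + 1 := by
  -- `σ` is `e` on the points `j.succ`, with `0` inserted just before `q.succ` in its cycle.
  set σ := decomposeFin.symm (q.succ, e)
  set ℓ := minimalPeriod e q
  have hℓ : 0 < ℓ := minimalPeriod_pos e q
  have horbit : ∀ i < ℓ, σ^[i + 1] 0 = (e^[i] q).succ := by
    intro i
    induction i with
    | zero => exact fun _ => decomposeFin_symm_apply_zero _ _
    | succ i ih =>
      intro hi
      have hne : e^[i + 1] q ≠ q :=
        not_isPeriodicPt_of_pos_of_lt_minimalPeriod (Nat.succ_ne_zero i) hi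
      rw [iterate_succ_apply', ih (by omega), decomposeFin_symm_apply_succ,
        ← iterate_succ_apply' e]
      exact swap_apply_of_ne_of_ne (Fin.succ_ne_zero _) ((Fin.succ_injective _).ne hne)
  have hper : IsPeriodicPt σ (ℓ + 1) 0 := by
    obtain ⟨j, hj⟩ := Nat.exists_eq_add_one_of_ne_zero hℓ.ne'
    have hq : e^[j + 1] q = q := hj ▸ iterate_minimalPeriod
    show σ^[ℓ + 1] 0 = 0
    rw [iterate_succ_apply', hj, horbit j (by omega), decomposeFin_symm_apply_succ,
      ← iterate_succ_apply' e, hq, swap_apply_right]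
  refine le_antisymm (hper.minimalPeriod_le ℓ.succ_pos) (Nat.succ_le_of_lt ?_)
  by_contra! hle
  obtain ⟨i, hi⟩ := Nat.exists_eq_add_one_of_ne_zero (minimalPeriod_pos σ 0).ne'
  have hfix : σ^[i + 1] 0 = 0 := hi ▸ iterate_minimalPeriod
  rw [horbit i (by omega)] at hfix
  exact Fin.succ_ne_zero _ hfix

theorem card_filter_minimalPeriod_eq_factorial (x : Fin n) {k : ℕ} (hk : 1 ≤ k)
    (hkn : k ≤ n) : #{σ : Perm (Fin n) | minimalPeriod σ x = k} = (n - 1)! := by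
  induction n generalizing k with
  | zero => exact x.elim0
  | succ N ih =>
    rw [card_filter_minimalPeriod_congr x 0, card_filter, ← decomposeFin.symm.sum_comp,
      Fintype.sum_prod_type, Fin.sum_univ_succ]
    simp only [← card_filter, minimalPeriod_decomposeFin_symm_zero,
      minimalPeriod_decomposeFin_symm_succ]
    rcases hk.eq_or_lt with rfl | hk
    · simp [fun q (e : Perm (Fin N)) => (minimalPeriod_pos e q).ne', Fintype.card_perm]
    · have hN : N ≠ 0 := by omega
      have hsucc : ∀ q : Fin N, #{e : Perm (Fin N) | minimalPeriod e q + 1 = k} = (N - 1)! :=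
        fun q => by
          rw [← ih q (k := k - 1) (by omega) (by omega)]
          exact congrArg _ (filter_congr fun e _ => by omega)
      simp [hk.ne, hsucc, Nat.mul_factorial_pred hN]

theorem sum_card_filter_minimalPeriod_eq_factorial {k : ℕ} (hk : 1 ≤ k) (hkn : k ≤ n) :
    ∑ σ : Perm (Fin n), #{x | minimalPeriod σ x = k} = n ! :=
  calc ∑ σ : Perm (Fin n), #{x | minimalPeriod σ x = k}
      = ∑ x : Fin n, #{σ : Perm (Fin n) | minimalPeriod σ x = k} := by
        simp only [card_filter]
        exact sum_comm
    _ = n ! := by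
        simp [card_filter_minimalPeriod_eq_factorial _ hk hkn,
          Nat.mul_factorial_pred (by omega : n ≠ 0)]

end Equiv.Perm

section CycleCount

open Equiv.Perm Function

open scoped Nat

variable {n k : ℕ}

theorem exists_minimalPeriod_eq_of_cycleCount_ne_zero {σ : Equiv.Perm (Fin n)}
    (h : cycleCount σ k ≠ 0) : ∃ x, minimalPeriod σ x = k := by
  by_contra! hnone
  simp [cycleCount, filter_false_of_mem fun x _ => hnone x] at h

theorem cycleCount_mul_eq_card (σ : Equiv.Perm (Fin n)) (hk : n < 2 * k) :
    cycleCount σ k * k = #{x | minimalPeriod σ x = k} := by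
  by_cases h : ∃ x, minimalPeriod σ x = k
  · obtain ⟨x, rfl⟩ := h
    rw [cycleCount, card_filter_minimalPeriod_eq_minimalPeriod σ (by simpa using hk),
      Nat.div_self (minimalPeriod_pos σ x), one_mul]
  · push Not at h
    simp [cycleCount, filter_false_of_mem fun x _ => h x]

theorem cycleCount_le_one (σ : Equiv.Perm (Fin n)) (hk : n < 2 * k) : cycleCount σ k ≤ 1 := by
  have hcard : #{x | minimalPeriod σ x = k} ≤ n := (card_le_univ _).trans_eq (Fintype.card_fin n)
  rw [cycleCount, Nat.le_iff_lt_add_one, Nat.div_lt_iff_lt_mul (by omega)]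
  omega

theorem cycleCount_eq_zero_or_eq_zero (σ : Equiv.Perm (Fin n)) {k' : ℕ} (hne : k ≠ k')
    (hkk' : n < k + k') : cycleCount σ k = 0 ∨ cycleCount σ k' = 0 := by
  by_contra! h
  obtain ⟨x, rfl⟩ := exists_minimalPeriod_eq_of_cycleCount_ne_zero h.1
  obtain ⟨y, rfl⟩ := exists_minimalPeriod_eq_of_cycleCount_ne_zero h.2
  exact hne (minimalPeriod_eq_of_mem_orbit_zpowers
    (mem_orbit_zpowers_of_card_lt_add (by simpa using hkk'))).symm

theorem cycleCountIn_le_one (σ : Equiv.Perm (Fin n)) {I : Finset ℕ} (hI : ∀ k ∈ I, n < 2 * k) :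
    cycleCountIn σ I ≤ 1 := by
  rw [cycleCountIn]
  by_cases h : ∃ k ∈ I, cycleCount σ k ≠ 0
  · obtain ⟨k, hk, hne⟩ := h
    rw [sum_eq_single_of_mem k hk fun k' hk' hk'k =>
      (cycleCount_eq_zero_or_eq_zero σ hk'k.symm
        (by have := hI k hk; have := hI k' hk'; omega)).resolve_left hne]
    exact cycleCount_le_one σ (hI k hk)
  · push Not at h
    rw [sum_eq_zero h]
    exact zero_le_one

theorem permP_eq_zero_eq_one_sub_permE (f : Equiv.Perm (Fin n) → ℕ) (hf : ∀ σ, f σ ≤ 1) :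
    permP n (fun σ => f σ = 0) = 1 - permE n (fun σ => f σ) := by
  have hsum : #{σ | f σ = 0} + ∑ σ, f σ = n ! := by
    have hind : ∑ σ, f σ = #{σ | ¬ f σ = 0} := by
      rw [card_filter]
      exact sum_congr rfl fun σ _ => by have := hf σ; split_ifs <;> omega
    rw [hind, card_filter_add_card_filter_not, card_univ, Fintype.card_perm, Fintype.card_fin]
  rw [permP, permE, Nat.card_eq_fintype_card, Fintype.card_subtype, eq_sub_iff_add_eq,
    ← add_div, div_eq_one_iff_eq (by positivity)]
  exact_mod_cast hsum

theorem permE_cycleCountIn (I : Finset ℕ) :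
    permE n (fun σ => cycleCountIn σ I) = ∑ k ∈ I, permE n (fun σ => cycleCount σ k) := by
  simp only [permE, cycleCountIn, Nat.cast_sum]
  rw [sum_comm, sum_div]

theorem permE_cycleCount (hk : n < 2 * k) (hkn : k ≤ n) :
    permE n (fun σ => cycleCount σ k) = 1 / k := by
  have hsum : (∑ σ : Equiv.Perm (Fin n), (cycleCount σ k : ℝ)) * k = n ! := by
    rw [sum_mul]
    exact_mod_cast (sum_congr rfl fun σ _ => cycleCount_mul_eq_card σ hk).trans
      (sum_card_filter_minimalPeriod_eq_factorial (by omega) hkn)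
  have hk0 : (k : ℝ) ≠ 0 := by norm_cast; omega
  rw [permE, div_eq_div_iff (by positivity) hk0, one_mul]
  exact hsum

end CycleCount

theorem nu_large_m_general (n m : ℕ) (h2 : (n : ℝ) / 2 ≤ m) :
    permP n (fun σ => cycleCountIn σ (Finset.Icc (m + 1) n) = 0)
      = 1 - ∑ k ∈ Finset.Icc (m + 1) n, (1 : ℝ) / k := by
  have hn : n ≤ 2 * m := by
    have : (n : ℝ) ≤ 2 * m := by linarith
    exact_mod_cast this
  have hI : ∀ k ∈ Icc (m + 1) n, n < 2 * k ∧ k ≤ n := fun k hk => by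
    rw [mem_Icc] at hk
    omega
  rw [permP_eq_zero_eq_one_sub_permE _ fun σ => cycleCountIn_le_one σ fun k hk => (hI k hk).1,
    permE_cycleCountIn]
  exact congrArg _ (sum_congr rfl fun k hk => permE_cycleCount (hI k hk).1 (hI k hk).2)

/-- For `n/2 ≤ m ≤ n`, the probability that a random `σ ∈ Sₙ` has no cycle of
length greater than `m` equals `1 - Σ_{k=m+1}^n 1/k`. -/
theorem nu_large_m (n m : ℕ) (h2 : (n : ℝ) / 2 ≤ m) (hmn : m ≤ n) :
    permP n (fun σ => cycleCountIn σ (Finset.Icc (m + 1) n) = 0)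
      = 1 - ∑ k ∈ Finset.Icc (m + 1) n, (1 : ℝ) / k :=
  nu_large_m_general n m h2
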